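/- arXiv:2206.03028 — 4 statements merged into one kernel-verified Lean document; each statement's English description precedes it below -/
import Mathlib

section
/- For every A_l-module X and all indices i,j,k,l ∈ I, the composite ĉ_{ikl} ∘ ĉ_{ijk} : G_{ij}G_{jk}G_{kl}(X) → G_{il}(X) (where ĉ_{ijk} is taken for the A_k-module G_{kl}(X)) is given by multiplication by G_{il}^{-1}(c_{ijk} · c_{ikl}) on X; explicitly, for all m ∈ X: G_{il}^{-1}(c_{ikl}) · ( G_{kl}^{-1}(G_{ik}^{-1}(c_{ijk})) · m ) = G_{il}^{-1}(c_{ijk} c_{ikl}) · m. -/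
namespace AlgEquiv

variable {R A B C : Type*} [CommSemiring R] [Semiring A] [Semiring B] [Semiring C]
  [Algebra R A] [Algebra R B] [Algebra R C]

theorem symm_symm_eq_of_comp_eq_conj {f : B ≃ₐ[R] C} {g : A ≃ₐ[R] B} {h : A ≃ₐ[R] C} {u : Cˣ}
    (hfg : ∀ a, f (g a) = u * h a * ↑u⁻¹) (b : C) :
    g.symm (f.symm b) = h.symm (↑u⁻¹ * b * u) := by
  apply h.injective
  rw [apply_symm_apply]
  calc h (g.symm (f.symm b)) = ↑u⁻¹ * (u * h (g.symm (f.symm b)) * ↑u⁻¹) * u := by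
        simp only [mul_assoc, Units.inv_mul_cancel_left, Units.inv_mul, mul_one]
    _ = ↑u⁻¹ * b * u := by rw [← hfg, apply_symm_apply, apply_symm_apply]

theorem symm_mul_symm_symm_of_comp_eq_conj {f : B ≃ₐ[R] C} {g : A ≃ₐ[R] B} {h : A ≃ₐ[R] C}
    {u : Cˣ} (hfg : ∀ a, f (g a) = u * h a * ↑u⁻¹) (b : C) :
    h.symm u * g.symm (f.symm b) = h.symm (b * u) := by
  rw [symm_symm_eq_of_comp_eq_conj hfg, ← map_mul, ← mul_assoc, ← mul_assoc,
    Units.mul_inv, one_mul]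

end AlgEquiv

theorem gerbe_morphism_comp_general
    {R : Type*} [CommRing R] {I : Type*} (A : I → Type*)
    [∀ i, Ring (A i)] [∀ i, Algebra R (A i)]
    (G : ∀ i j : I, A j ≃ₐ[R] A i) (c : ∀ i j k : I, (A i)ˣ)
    (hG : ∀ (i j k : I) (a : A k),
      G i j (G j k a) = (c i j k : A i) * G i k a * (((c i j k)⁻¹ : (A i)ˣ) : A i))
    (i j k l : I) (X : Type*) [AddCommGroup X] [Module (A l) X]
    (m : X) :
    (G i l).symm ((c i k l : A i)) • ((G k l).symm ((G i k).symm ((c i j k : A i))) • m)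
      = (G i l).symm ((c i j k : A i) * (c i k l : A i)) • m := by
  rw [smul_smul, AlgEquiv.symm_mul_symm_symm_of_comp_eq_conj (hG i k l)]

/-- For every `A_l`-module `X` and all indices `i,j,k,l ∈ I`, the composite
`ĉ_{ikl} ∘ ĉ_{ijk} : G_{ij}G_{jk}G_{kl}(X) → G_{il}(X)` is given by multiplication by
`G_{il}⁻¹(c_{ijk} · c_{ikl})` on `X`; explicitly, for all `m ∈ X`:
`G_{il}⁻¹(c_{ikl}) • (G_{kl}⁻¹(G_{ik}⁻¹(c_{ijk})) • m) = G_{il}⁻¹(c_{ijk} c_{ikl}) • m`. -/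
theorem gerbe_morphism_comp
    {R : Type*} [CommRing R] {I : Type*} (A : I → Type*)
    [∀ i, Ring (A i)] [∀ i, Algebra R (A i)]
    (G : ∀ i j : I, A j ≃ₐ[R] A i) (c : ∀ i j k : I, (A i)ˣ)
    (hG : ∀ (i j k : I) (a : A k),
      G i j (G j k a) = (c i j k : A i) * G i k a * (((c i j k)⁻¹ : (A i)ˣ) : A i))
    (hc : ∀ i j k l : I,
      (c i j k : A i) * (c i k l : A i) = G i j (c j k l : A j) * (c i j l : A i))
    (i j k l : I) (X : Type*) [AddCommGroup X] [Module (A l) X]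
    (m : X) :
    (G i l).symm ((c i k l : A i)) • ((G k l).symm ((G i k).symm ((c i j k : A i))) • m)
      = (G i l).symm ((c i j k : A i) * (c i k l : A i)) • m :=
  gerbe_morphism_comp_general A G c hG i j k l X m
end

section
/- The gerbe-twisted cup product is well defined and associative: let E_a, E_b, E_c, E_d be modules over A_a, A_b, A_c, A_d respectively, u : G_{ab}(E_b) → E_a an A_a-module homomorphism, v : G_{bc}(E_c) → E_b an A_b-module homomorphism and w : G_{cd}(E_d) → E_c an A_c-module homomorphism, and define u ∪_c v := u ∘ G_{ab}(v) ∘ ĉ_{abc}^{-1} (a map G_{ac}(E_c) → E_a, where G_{ab}(v) is the underlying map of v regarded as a map G_{ab}G_{bc}(E_c) → G_{ab}(E_b)). Then u ∪_c v is an A_a-module homomorphism, and (u ∪_c v) ∪_c w = u ∪_c (v ∪_c w) as maps G_{ad}(E_d) → E_a. -/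
/-!
Writing `φ_{ij} = G_{ij}⁻¹`, the gerbe relation `G_{ij} G_{jk} = c_{ijk} G_{ik}(·) c_{ijk}⁻¹`
says `φ_{jk} φ_{ij}(y) · φ_{ik}(c_{ijk}⁻¹) = φ_{ik}(c_{ijk}⁻¹ y)`: multiplication by
`φ_{ik}(c_{ijk}⁻¹)` intertwines the twists `G_{ij}G_{jk}` and `G_{ik}`. This makes `u ∪_c v` linear.
Associativity reduces, after moving `φ_{ad}(c_{acd}⁻¹)` through `w`, to an identity between two
elements of `A_d`; by the same rule both are images under `φ_{ad}` of inverses of the two sides of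
the cocycle condition `c_{abc} c_{acd} = G_{ab}(c_{bcd}) c_{abd}`.
-/

theorem AlgEquiv.symm_symm_mul_symm_inv {R A B C : Type*} [CommSemiring R]
    [Semiring A] [Semiring B] [Semiring C] [Algebra R A] [Algebra R B] [Algebra R C]
    (f : B ≃ₐ[R] C) (g : A ≃ₐ[R] B) (h : A ≃ₐ[R] C) (u : Cˣ)
    (hfgh : ∀ x, f (g x) = u * h x * ↑u⁻¹) (y : C) :
    g.symm (f.symm y) * h.symm ↑u⁻¹ = h.symm (↑u⁻¹ * y) := by
  have hy : y = u * h (g.symm (f.symm y)) * ↑u⁻¹ := by simpa using hfgh (g.symm (f.symm y))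
  apply h.injective
  rw [map_mul, h.apply_symm_apply, h.apply_symm_apply]
  conv_rhs => rw [hy]
  simp [mul_assoc]

section Gerbe

variable {R : Type*} [CommRing R] {I : Type*} {A : I → Type*}
  [∀ i, Ring (A i)] [∀ i, Algebra R (A i)]
  (G : ∀ i j : I, A j ≃ₐ[R] A i) (co : ∀ i : I, I → I → (A i)ˣ)

theorem inv_co_mul_inv_co
    (hc : ∀ i j k l : I,
      (co i j k : A i) * (co i k l : A i) = G i j (co j k l : A j) * (co i j l : A i))
    (a b c d : I) :
    (((co a c d)⁻¹ : (A a)ˣ) : A a) * (((co a b c)⁻¹ : (A a)ˣ) : A a)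
      = (((co a b d)⁻¹ : (A a)ˣ) : A a) * G a b (((co b c d)⁻¹ : (A b)ˣ) : A b) := by
  have hc_units : co a b c * co a c d
      = Units.map (G a b : A b →* A a) (co b c d) * co a b d :=
    Units.ext (hc a b c d)
  have := congrArg (fun x : (A a)ˣ => ((x⁻¹ : (A a)ˣ) : A a)) hc_units
  simpa [mul_inv_rev, ← map_inv] using this

/-- The cup product `u ∪_c v = u ∘ G_{ab}(v) ∘ ĉ_{abc}⁻¹ : G_{ac}(E_c) → E_a`. -/
def gerbeCup (a b c : I) {Ea Eb Ec : Type*} [AddCommGroup Ec] [Module (A c) Ec]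
    (u : Eb → Ea) (v : Ec → Eb) : Ec → Ea :=
  fun m => u (v ((G a c).symm (((co a b c)⁻¹ : (A a)ˣ) : A a) • m))

variable {G co}
variable {Ea Eb Ec Ed : Type*} [AddCommGroup Ec] [AddCommGroup Ed]

theorem gerbeCup_add {a b c : I} [Module (A c) Ec] [Add Ea] [Add Eb]
    {u : Eb → Ea} {v : Ec → Eb}
    (hu_add : ∀ m m' : Eb, u (m + m') = u m + u m')
    (hv_add : ∀ m m' : Ec, v (m + m') = v m + v m') (m m' : Ec) :
    gerbeCup G co a b c u v (m + m') = gerbeCup G co a b c u v m + gerbeCup G co a b c u v m' := by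
  simp only [gerbeCup, smul_add, hv_add, hu_add]

theorem gerbeCup_smul
    (hG : ∀ (i j k : I) (a : A k),
      G i j (G j k a) = (co i j k : A i) * G i k a * (((co i j k)⁻¹ : (A i)ˣ) : A i))
    {a b c : I} [AddCommGroup Ea] [Module (A a) Ea] [AddCommGroup Eb] [Module (A b) Eb]
    [Module (A c) Ec] {u : Eb → Ea} {v : Ec → Eb}
    (hu_lin : ∀ (x : A a) (m : Eb), u ((G a b).symm x • m) = x • u m)
    (hv_lin : ∀ (x : A b) (m : Ec), v ((G b c).symm x • m) = x • v m) (x : A a) (m : Ec) :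
    gerbeCup G co a b c u v ((G a c).symm x • m) = x • gerbeCup G co a b c u v m := by
  have hswap : (G a c).symm (((co a b c)⁻¹ : (A a)ˣ) : A a) * (G a c).symm x
      = (G b c).symm ((G a b).symm x) * (G a c).symm (((co a b c)⁻¹ : (A a)ˣ) : A a) := by
    rw [AlgEquiv.symm_symm_mul_symm_inv _ _ _ _ (hG a b c), map_mul]
  simp only [gerbeCup]
  rw [← mul_smul, hswap, mul_smul, hv_lin, hu_lin]

theorem gerbeCup_assoc
    (hG : ∀ (i j k : I) (a : A k),
      G i j (G j k a) = (co i j k : A i) * G i k a * (((co i j k)⁻¹ : (A i)ˣ) : A i))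
    (hc : ∀ i j k l : I,
      (co i j k : A i) * (co i k l : A i) = G i j (co j k l : A j) * (co i j l : A i))
    {a b c d : I} [Module (A c) Ec] [Module (A d) Ed]
    {u : Eb → Ea} {v : Ec → Eb} {w : Ed → Ec}
    (hw_lin : ∀ (x : A c) (m : Ed), w ((G c d).symm x • m) = x • w m) (m : Ed) :
    gerbeCup G co a c d (gerbeCup G co a b c u v) w m
      = gerbeCup G co a b d u (gerbeCup G co b c d v w) m := by
  have hunits : (G c d).symm ((G a c).symm (((co a b c)⁻¹ : (A a)ˣ) : A a))
        * (G a d).symm (((co a c d)⁻¹ : (A a)ˣ) : A a)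
      = (G b d).symm (((co b c d)⁻¹ : (A b)ˣ) : A b)
        * (G a d).symm (((co a b d)⁻¹ : (A a)ˣ) : A a) := by
    calc _ = (G a d).symm
            ((((co a c d)⁻¹ : (A a)ˣ) : A a) * (((co a b c)⁻¹ : (A a)ˣ) : A a)) :=
          AlgEquiv.symm_symm_mul_symm_inv _ _ _ _ (hG a c d) _
      _ = (G a d).symm
            ((((co a b d)⁻¹ : (A a)ˣ) : A a) * G a b (((co b c d)⁻¹ : (A b)ˣ) : A b)) := by
          rw [inv_co_mul_inv_co G co hc]
      _ = _ := by
          rw [← AlgEquiv.symm_symm_mul_symm_inv _ _ _ _ (hG a b d), AlgEquiv.symm_apply_apply]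
  simp only [gerbeCup]
  rw [← hw_lin, ← mul_smul, hunits, mul_smul]

end Gerbe

theorem gerbe_cup_product_assoc_general
    {R : Type*} [CommRing R] {I : Type*} (A : I → Type*)
    [∀ i, Ring (A i)] [∀ i, Algebra R (A i)]
    (G : ∀ i j : I, A j ≃ₐ[R] A i) (co : ∀ i j k : I, (A i)ˣ)
    (hG : ∀ (i j k : I) (a : A k),
      G i j (G j k a) = (co i j k : A i) * G i k a * (((co i j k)⁻¹ : (A i)ˣ) : A i))
    (hc : ∀ i j k l : I,
      (co i j k : A i) * (co i k l : A i) = G i j (co j k l : A j) * (co i j l : A i))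
    (a b c d : I)
    (Ea : Type*) [AddCommGroup Ea] [Module (A a) Ea]
    (Eb : Type*) [AddCommGroup Eb] [Module (A b) Eb]
    (Ec : Type*) [AddCommGroup Ec] [Module (A c) Ec]
    (Ed : Type*) [AddCommGroup Ed] [Module (A d) Ed]
    (u : Eb → Ea) (v : Ec → Eb) (w : Ed → Ec)
    (hu_add : ∀ m m' : Eb, u (m + m') = u m + u m')
    (hu_lin : ∀ (x : A a) (m : Eb), u ((G a b).symm x • m) = x • u m)
    (hv_add : ∀ m m' : Ec, v (m + m') = v m + v m')
    (hv_lin : ∀ (x : A b) (m : Ec), v ((G b c).symm x • m) = x • v m)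
    (hw_lin : ∀ (x : A c) (m : Ed), w ((G c d).symm x • m) = x • w m) :
    -- `u ∪_c v` is additive
    (∀ m m' : Ec,
        u (v ((G a c).symm ((((co a b c)⁻¹ : (A a)ˣ) : A a)) • (m + m')))
          = u (v ((G a c).symm ((((co a b c)⁻¹ : (A a)ˣ) : A a)) • m))
            + u (v ((G a c).symm ((((co a b c)⁻¹ : (A a)ˣ) : A a)) • m')))
    -- `u ∪_c v` is an `A_a`-module homomorphism `G_{ac}(E_c) → E_a`
    ∧ (∀ (x : A a) (m : Ec),
        u (v ((G a c).symm ((((co a b c)⁻¹ : (A a)ˣ) : A a)) • ((G a c).symm x • m)))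
          = x • u (v ((G a c).symm ((((co a b c)⁻¹ : (A a)ˣ) : A a)) • m)))
    -- associativity `(u ∪_c v) ∪_c w = u ∪_c (v ∪_c w)` as maps `G_{ad}(E_d) → E_a`
    ∧ (∀ m : Ed,
        u (v ((G a c).symm ((((co a b c)⁻¹ : (A a)ˣ) : A a)) •
              w ((G a d).symm ((((co a c d)⁻¹ : (A a)ˣ) : A a)) • m)))
          = u (v (w ((G b d).symm ((((co b c d)⁻¹ : (A b)ˣ) : A b)) •
              ((G a d).symm ((((co a b d)⁻¹ : (A a)ˣ) : A a)) • m))))) :=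
  ⟨gerbeCup_add (G := G) (co := co) hu_add hv_add,
    gerbeCup_smul hG hu_lin hv_lin,
    gerbeCup_assoc (u := u) (v := v) hG hc hw_lin⟩

/-- The gerbe-twisted cup product `u ∪_c v := u ∘ G_{ab}(v) ∘ ĉ_{abc}⁻¹`
of intertwining module maps is well defined (an `A_a`-module homomorphism) and associative. -/
theorem gerbe_cup_product_assoc
    {R : Type*} [CommRing R] {I : Type*} (A : I → Type*)
    [∀ i, Ring (A i)] [∀ i, Algebra R (A i)]
    (G : ∀ i j : I, A j ≃ₐ[R] A i) (co : ∀ i j k : I, (A i)ˣ)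
    (hG : ∀ (i j k : I) (a : A k),
      G i j (G j k a) = (co i j k : A i) * G i k a * (((co i j k)⁻¹ : (A i)ˣ) : A i))
    (hc : ∀ i j k l : I,
      (co i j k : A i) * (co i k l : A i) = G i j (co j k l : A j) * (co i j l : A i))
    (a b c d : I)
    (Ea : Type*) [AddCommGroup Ea] [Module (A a) Ea]
    (Eb : Type*) [AddCommGroup Eb] [Module (A b) Eb]
    (Ec : Type*) [AddCommGroup Ec] [Module (A c) Ec]
    (Ed : Type*) [AddCommGroup Ed] [Module (A d) Ed]
    (u : Eb → Ea) (v : Ec → Eb) (w : Ed → Ec)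
    (hu_add : ∀ m m' : Eb, u (m + m') = u m + u m')
    (hu_lin : ∀ (x : A a) (m : Eb), u ((G a b).symm x • m) = x • u m)
    (hv_add : ∀ m m' : Ec, v (m + m') = v m + v m')
    (hv_lin : ∀ (x : A b) (m : Ec), v ((G b c).symm x • m) = x • v m)
    (hw_add : ∀ m m' : Ed, w (m + m') = w m + w m')
    (hw_lin : ∀ (x : A c) (m : Ed), w ((G c d).symm x • m) = x • w m) :
    -- `u ∪_c v` is additive
    (∀ m m' : Ec,
        u (v ((G a c).symm ((((co a b c)⁻¹ : (A a)ˣ) : A a)) • (m + m')))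
          = u (v ((G a c).symm ((((co a b c)⁻¹ : (A a)ˣ) : A a)) • m))
            + u (v ((G a c).symm ((((co a b c)⁻¹ : (A a)ˣ) : A a)) • m')))
    -- `u ∪_c v` is an `A_a`-module homomorphism `G_{ac}(E_c) → E_a`
    ∧ (∀ (x : A a) (m : Ec),
        u (v ((G a c).symm ((((co a b c)⁻¹ : (A a)ˣ) : A a)) • ((G a c).symm x • m)))
          = x • u (v ((G a c).symm ((((co a b c)⁻¹ : (A a)ˣ) : A a)) • m)))
    -- associativity `(u ∪_c v) ∪_c w = u ∪_c (v ∪_c w)` as maps `G_{ad}(E_d) → E_a`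
    ∧ (∀ m : Ed,
        u (v ((G a c).symm ((((co a b c)⁻¹ : (A a)ˣ) : A a)) •
              w ((G a d).symm ((((co a c d)⁻¹ : (A a)ˣ) : A a)) • m)))
          = u (v (w ((G b d).symm ((((co b c d)⁻¹ : (A b)ˣ) : A b)) •
              ((G a d).symm ((((co a b d)⁻¹ : (A a)ˣ) : A a)) • m))))) :=
  gerbe_cup_product_assoc_general A G co hG hc a b c d Ea Eb Ec Ed u v w hu_add hu_lin hv_add hv_lin
    hw_lin
end

section
/- Leibniz rule for the gerbe-twisted product: let E, E'', E' be ℤ-graded modules over A_c, A_b, A_a respectively, equipped with A_c-, A_b-, A_a-linear endomorphisms δ, δ'', δ' of degree 1. Let μ : G_{ab}(E'') → E' be an A_a-module map homogeneous of degree m and ν : G_{bc}(E) → E'' an A_b-module map homogeneous of degree n. Set dμ := δ' ∘ μ − (−1)^m μ ∘ δ'', dν := δ'' ∘ ν − (−1)^n ν ∘ δ, and d(μ ∪_c ν) := δ' ∘ (μ ∪_c ν) − (−1)^{m+n} (μ ∪_c ν) ∘ δ, where μ ∪_c ν := μ ∘ G_{ab}(ν) ∘ ĉ_{abc}^{-1}.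 Then d(μ ∪_c ν) = (dμ) ∪_c ν + (−1)^m μ ∪_c (dν). -/
/-!
The Leibniz rule is a formal identity about the differential `d f = δ' ∘ f - (-1)^|f| f ∘ δ` of
the Hom complex. The twist `ĉ_{abc}⁻¹` is scalar multiplication by an element of `A_c`, hence a
chain map because `δ` is `A_c`-linear, and it passes through `d`; what remains is the usual
Leibniz rule `d(μ ∘ ν) = dμ ∘ ν + (-1)^m μ ∘ dν` for composites, which follows from the
additivity of `μ` and `(-1)^(m+n) = (-1)^m (-1)^n`.
-/

section HomDiff

variable {M₀ M N P : Type*} [AddCommGroup N] [AddCommGroup P]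

/-- The differential of the Hom complex, with `ε` standing for the sign `(-1)^|f|`. -/
def homDiff (δ : M → M) (δ' : N → N) (ε : ℤ) (f : M → N) : M → N :=
  fun x => δ' (f x) - ε • f (δ x)

theorem homDiff_comp_of_commute (δ₀ : M₀ → M₀) (δ : M → M) (δ' : N → N) (ε : ℤ) (f : M → N)
    (g : M₀ → M) (hg : ∀ x, δ (g x) = g (δ₀ x)) :
    homDiff δ₀ δ' ε (f ∘ g) = homDiff δ δ' ε f ∘ g := by
  funext x
  simp only [homDiff, Function.comp_apply, hg]

theorem homDiff_comp (δ : M → M) (δ'' : N → N) (δ' : P → P) (s t : ℤ) (μ : N →+ P)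
    (ν : M → N) (x : M) :
    homDiff δ δ' (s * t) (μ ∘ ν) x = homDiff δ'' δ' s μ (ν x) + s • μ (homDiff δ δ'' t ν x) := by
  simp only [homDiff, Function.comp_apply, map_sub, map_zsmul, smul_sub, smul_smul]
  abel

end HomDiff

theorem gerbe_cup_leibniz_general
    {R : Type*} [CommRing R] {I : Type*} (A : I → Type*)
    [∀ i, Ring (A i)] [∀ i, Algebra R (A i)]
    (G : ∀ i j : I, A j ≃ₐ[R] A i) (co : ∀ i j k : I, (A i)ˣ)
    (a b c : I)
    -- the graded modules E (over A_c), E'' (over A_b), E' (over A_a)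
    (E : Type*) [AddCommGroup E] [Module (A c) E]
    (E'' : Type*) [AddCommGroup E''] [Module (A b) E'']
    (E' : Type*) [AddCommGroup E'] [Module (A a) E']
    -- degree-1 linear endomorphisms
    (δ : E → E) (δ'' : E'' → E'') (δ' : E' → E')
    (hδ_lin : ∀ (h : A c) (x : E), δ (h • x) = h • δ x)
    -- μ : G_{ab}(E'') → E' homogeneous of degree m, ν : G_{bc}(E) → E'' homogeneous of degree n
    (m n : ℤ) (μ : E'' → E') (ν : E → E'')
    (hμ_add : ∀ x y, μ (x + y) = μ x + μ y) :
    ∀ x : E,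
      -- d(μ ∪_c ν) x
      δ' (μ (ν ((G a c).symm ((((co a b c)⁻¹ : (A a)ˣ) : A a)) • x)))
        - ((((-1 : (ℤ)ˣ) ^ (m + n) : (ℤ)ˣ) : ℤ)) •
            μ (ν ((G a c).symm ((((co a b c)⁻¹ : (A a)ˣ) : A a)) • δ x))
      = -- (dμ) ∪_c ν x
        (δ' (μ (ν ((G a c).symm ((((co a b c)⁻¹ : (A a)ˣ) : A a)) • x)))
          - ((((-1 : (ℤ)ˣ) ^ m : (ℤ)ˣ) : ℤ)) •
              μ (δ'' (ν ((G a c).symm ((((co a b c)⁻¹ : (A a)ˣ) : A a)) • x))))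
        + -- (−1)^m • (μ ∪_c (dν)) x
        ((((-1 : (ℤ)ˣ) ^ m : (ℤ)ˣ) : ℤ)) •
          μ (δ'' (ν ((G a c).symm ((((co a b c)⁻¹ : (A a)ˣ) : A a)) • x))
              - ((((-1 : (ℤ)ˣ) ^ n : (ℤ)ˣ) : ℤ)) •
                  ν (δ ((G a c).symm ((((co a b c)⁻¹ : (A a)ˣ) : A a)) • x))) := by
  intro x
  set u : A c := (G a c).symm ((co a b c)⁻¹ : (A a)ˣ)
  have hsign : (((-1 : ℤˣ) ^ (m + n) : ℤˣ) : ℤ) = ((-1 : ℤˣ) ^ m : ℤˣ) * ((-1 : ℤˣ) ^ n : ℤˣ) := by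
    rw [zpow_add, Units.val_mul]
  have hcup := congrFun (homDiff_comp_of_commute δ δ δ' (((-1 : ℤˣ) ^ (m + n) : ℤˣ) : ℤ)
    (μ ∘ ν) (u • ·) (fun y => hδ_lin u y)) x
  rw [hsign] at hcup ⊢
  exact hcup.trans (homDiff_comp δ δ'' δ' _ _ (AddMonoidHom.mk' μ hμ_add) ν (u • x))

/-- Leibniz rule for the gerbe-twisted product: for ℤ-graded modules
`E` (over `A_c`), `E''` (over `A_b`), `E'` (over `A_a`) with degree-1 linear endomorphisms
`δ, δ'', δ'`, an `A_a`-module map `μ : G_{ab}(E'') → E'` homogeneous of degree `m` and an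
`A_b`-module map `ν : G_{bc}(E) → E''` homogeneous of degree `n`, one has
`d(μ ∪_c ν) = (dμ) ∪_c ν + (−1)^m μ ∪_c (dν)`. -/
theorem gerbe_cup_leibniz
    {R : Type*} [CommRing R] {I : Type*} (A : I → Type*)
    [∀ i, Ring (A i)] [∀ i, Algebra R (A i)]
    (G : ∀ i j : I, A j ≃ₐ[R] A i) (co : ∀ i j k : I, (A i)ˣ)
    (hG : ∀ (i j k : I) (a : A k),
      G i j (G j k a) = (co i j k : A i) * G i k a * (((co i j k)⁻¹ : (A i)ˣ) : A i))
    (hc : ∀ i j k l : I,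
      (co i j k : A i) * (co i k l : A i) = G i j (co j k l : A j) * (co i j l : A i))
    (a b c : I)
    -- the graded modules E (over A_c), E'' (over A_b), E' (over A_a)
    (E : Type*) [AddCommGroup E] [Module (A c) E]
    (E'' : Type*) [AddCommGroup E''] [Module (A b) E'']
    (E' : Type*) [AddCommGroup E'] [Module (A a) E']
    (grE : ℤ → AddSubgroup E) (grE'' : ℤ → AddSubgroup E'') (grE' : ℤ → AddSubgroup E')
    (hgrE : DirectSum.IsInternal grE) (hgrE'' : DirectSum.IsInternal grE'')
    (hgrE' : DirectSum.IsInternal grE')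
    -- degree-1 linear endomorphisms
    (δ : E → E) (δ'' : E'' → E'') (δ' : E' → E')
    (hδ_add : ∀ x y, δ (x + y) = δ x + δ y)
    (hδ_lin : ∀ (h : A c) (x : E), δ (h • x) = h • δ x)
    (hδ_deg : ∀ k : ℤ, ∀ x ∈ grE k, δ x ∈ grE (k + 1))
    (hδ''_add : ∀ x y, δ'' (x + y) = δ'' x + δ'' y)
    (hδ''_lin : ∀ (h : A b) (x : E''), δ'' (h • x) = h • δ'' x)
    (hδ''_deg : ∀ k : ℤ, ∀ x ∈ grE'' k, δ'' x ∈ grE'' (k + 1))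
    (hδ'_add : ∀ x y, δ' (x + y) = δ' x + δ' y)
    (hδ'_lin : ∀ (h : A a) (x : E'), δ' (h • x) = h • δ' x)
    (hδ'_deg : ∀ k : ℤ, ∀ x ∈ grE' k, δ' x ∈ grE' (k + 1))
    -- μ : G_{ab}(E'') → E' homogeneous of degree m, ν : G_{bc}(E) → E'' homogeneous of degree n
    (m n : ℤ) (μ : E'' → E') (ν : E → E'')
    (hμ_add : ∀ x y, μ (x + y) = μ x + μ y)
    (hμ_lin : ∀ (h : A a) (x : E''), μ ((G a b).symm h • x) = h • μ x)
    (hμ_deg : ∀ k : ℤ, ∀ x ∈ grE'' k, μ x ∈ grE' (k + m))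
    (hν_add : ∀ x y, ν (x + y) = ν x + ν y)
    (hν_lin : ∀ (h : A b) (x : E), ν ((G b c).symm h • x) = h • ν x)
    (hν_deg : ∀ k : ℤ, ∀ x ∈ grE k, ν x ∈ grE'' (k + n)) :
    ∀ x : E,
      -- d(μ ∪_c ν) x
      δ' (μ (ν ((G a c).symm ((((co a b c)⁻¹ : (A a)ˣ) : A a)) • x)))
        - ((((-1 : (ℤ)ˣ) ^ (m + n) : (ℤ)ˣ) : ℤ)) •
            μ (ν ((G a c).symm ((((co a b c)⁻¹ : (A a)ˣ) : A a)) • δ x))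
      = -- (dμ) ∪_c ν x
        (δ' (μ (ν ((G a c).symm ((((co a b c)⁻¹ : (A a)ˣ) : A a)) • x)))
          - ((((-1 : (ℤ)ˣ) ^ m : (ℤ)ˣ) : ℤ)) •
              μ (δ'' (ν ((G a c).symm ((((co a b c)⁻¹ : (A a)ˣ) : A a)) • x))))
        + -- (−1)^m • (μ ∪_c (dν)) x
        ((((-1 : (ℤ)ˣ) ^ m : (ℤ)ˣ) : ℤ)) •
          μ (δ'' (ν ((G a c).symm ((((co a b c)⁻¹ : (A a)ˣ) : A a)) • x))
              - ((((-1 : (ℤ)ˣ) ^ n : (ℤ)ˣ) : ℤ)) •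
                  ν (δ ((G a c).symm ((((co a b c)⁻¹ : (A a)ˣ) : A a)) • x))) :=
  gerbe_cup_leibniz_general A G co a b c E E'' E' δ δ'' δ' hδ_lin m n μ ν hμ_add
end

section
/- Decomposition formula for the gerbe-twisted multilinear product M: for all 0 ≤ p < q ≤ k and all elements y_r, z_r ∈ A_r (r = 0, …, k), one has M_{(k,k−1,…,0)}( y_k z_k ⊗ y_{k−1} z_{k−1} ⊗ ⋯ ⊗ y_0 z_0 ) = M_{(k,…,q+1,q,p,p−1,…,0)}( y_k z_k ⊗ ⋯ ⊗ y_{q+1} z_{q+1} ⊗ y_q ⊗ W·z_p ⊗ y_{p−1} z_{p−1} ⊗ ⋯ ⊗ y_0 z_0 ), where the outer product is taken along the index sequence (k, k−1, …, q+1, q, p, p−1, …, 0), the slot of index q receives y_q, the slot of index p receives W·z_p, and W := M_{(q,q−1,…,p)}( z_q ⊗ y_{q−1} z_{q−1} ⊗ ⋯ ⊗ y_{p+1} z_{p+1} ⊗ y_p ) ∈ A_p. -/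
/-!
Since `c_{b,i,i} = 1`, a slot `y_q z_q` may be split into adjacent slots `y_q`, `z_q`, and `M`
splits at any seam into the products on either side separated by the twisting factor
`c_{b,j,i}⁻¹`. The run `z_q, y_{q-1} z_{q-1}, …, y_p` computed over the base `b` is related
to the same run computed over `p` by `G_{b,p}(M_p(run)) = c_{b,p,q} · M_b(run) · c_{b,p,m}⁻¹`
(`m` the last index of the run), which follows slot by slot from the conjugation rule and the
cocycle identity. So `G_{b,p}(W)` reproduces the run over `b` up to `c_{b,p,q}`, which cancels
the seam factor in front of the slot `W z_p`.
-/

section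

variable {R : Type} [CommRing R] {A : ℕ → Type} [∀ i, Ring (A i)] [∀ i, Algebra R (A i)]

/-- The gerbe-twisted product `M_{(i_0,…,i_m)}(u_0 ⊗ ⋯ ⊗ u_m)` along a (decreasing) list of
slots `[(i_0,u_0), …, (i_{m−1},u_{m−1})]` with base value `last = u_m ∈ A b`:
`G_{b,i_0}(u_0) · c_{b,i_1,i_0}⁻¹ · G_{b,i_1}(u_1) ⋯ c_{b,i_{m−1},i_{m−2}}⁻¹ · G_{b,i_{m−1}}(u_{m−1}) · u_m`. -/
def Mprod (G : ∀ i j : ℕ, A j →ₐ[R] A i) (c : ∀ i j l : ℕ, (A i)ˣ) (b : ℕ) (last : A b) :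
    List ((i : ℕ) × A i) → A b
  | [] => last
  | [⟨i, u⟩] => G b i u * last
  | ⟨i, u⟩ :: ⟨j, v⟩ :: rest =>
      G b i u * (((c b j i)⁻¹ : (A b)ˣ) : A b) * Mprod G c b last (⟨j, v⟩ :: rest)

/-- The decreasing list of indices `[a, a−1, …, b]` (empty when `b > a`). -/
def descIdx (a b : ℕ) : List ℕ := ((List.range (a + 1 - b)).map (fun t => b + t)).reverse

theorem descIdx_eq_reverse_range' (a b : ℕ) :
    descIdx a b = (List.range' b (a + 1 - b)).reverse := by
  rw [descIdx, List.range'_eq_map_range]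

theorem descIdx_eq_append_cons {a b m : ℕ} (hb : 0 < b) (hbm : b ≤ m) (hma : m ≤ a) :
    descIdx a b = descIdx a (m + 1) ++ m :: descIdx (m - 1) b := by
  have hlen : a + 1 - b = (m - 1 + 1 - b) + (1 + (a + 1 - (m + 1))) := by omega
  have hmid : b + (m - 1 + 1 - b) = m := by omega
  rw [descIdx_eq_reverse_range', hlen, ← List.range'_append_1, hmid, ← List.range'_append_1,
    List.range'_one]
  simp only [descIdx_eq_reverse_range', List.reverse_append, List.reverse_cons,
    List.append_assoc, List.singleton_append]

theorem descIdx_eq_cons {a b : ℕ} (hb : 0 < b) (hba : b ≤ a) :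
    descIdx a b = a :: descIdx (a - 1) b := by
  rw [descIdx_eq_append_cons hb hba le_rfl, descIdx_eq_reverse_range', Nat.sub_self,
    List.range'_zero, List.reverse_nil, List.nil_append]

theorem descIdx_isChain_ge (a b : ℕ) : (descIdx a b).IsChain (· ≥ ·) := by
  rw [descIdx_eq_reverse_range', List.isChain_reverse]
  exact (List.isChain_range' b _ 1).imp fun x y h => by omega

theorem le_of_mem_descIdx {a b r : ℕ} (hr : r ∈ descIdx a b) : b ≤ r := by
  rw [descIdx_eq_reverse_range', List.mem_reverse, List.mem_range'_1] at hr
  exact hr.1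

theorem Units.inv_mul_map_inv_mul_eq_inv {S T F : Type*} [Monoid S] [Monoid T] [FunLike F S T]
    [MonoidHomClass F S T] (f : F) {x y z : Tˣ} {w : Sˣ} (h : (x * y : T) = f w * z) :
    ((z⁻¹ : Tˣ) : T) * f ((w⁻¹ : Sˣ) : S) * x = ((y⁻¹ : Tˣ) : T) := by
  have hu : x * y = Units.map (f : S →* T) w * z := Units.ext (by simpa using h)
  have key : z⁻¹ * (Units.map (f : S →* T) w)⁻¹ * x = y⁻¹ := by
    rw [eq_inv_mul_of_mul_eq hu]
    group
  simpa using congrArg Units.val key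

section

variable (G : ∀ i j : ℕ, A j →ₐ[R] A i) (c : ∀ i : ℕ, ℕ → ℕ → (A i)ˣ)

def ConjugationRule : Prop :=
  ∀ i j l : ℕ, i ≤ j → j ≤ l → ∀ x : A l,
    G i j (G j l x) = (c i j l : A i) * G i l x * (((c i j l)⁻¹ : (A i)ˣ) : A i)

def CocycleCondition : Prop :=
  ∀ i j l m : ℕ, i ≤ j → j ≤ l → l ≤ m →
    (c i j l : A i) * (c i l m : A i) = G i j (c j l m : A j) * (c i j m : A i)

theorem Mprod_eq_Mprod_one_mul (b : ℕ) (last : A b) (L : List ((i : ℕ) × A i)) :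
    Mprod G c b last L = Mprod G c b 1 L * last := by
  fun_induction Mprod G c b last L <;> simp_all [Mprod, mul_assoc]

theorem Mprod_one_cons_append_cons (b i : ℕ) (u : A i) (L : List ((i : ℕ) × A i)) (j : ℕ)
    (v : A j) (T : List ((i : ℕ) × A i)) :
    Mprod G c b 1 (⟨i, u⟩ :: (L ++ ⟨j, v⟩ :: T)) =
      Mprod G c b 1 (⟨i, u⟩ :: L) * ((c b j ((L.map Sigma.fst).getLastD i))⁻¹ : (A b)ˣ) *
        Mprod G c b 1 (⟨j, v⟩ :: T) := by
  induction L generalizing i u with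
  | nil => simp [Mprod]
  | cons x L ih =>
    obtain ⟨a, w⟩ := x
    rw [List.cons_append, Mprod, ih, Mprod, List.map_cons, List.getLastD_cons]
    simp only [mul_assoc]

theorem Mprod_one_append_cons_cons (b : ℕ) (H : List ((i : ℕ) × A i)) (i : ℕ) (u : A i)
    (j : ℕ) (v : A j) (T : List ((i : ℕ) × A i)) :
    Mprod G c b 1 (H ++ ⟨i, u⟩ :: ⟨j, v⟩ :: T) =
      Mprod G c b 1 (H ++ [⟨i, u⟩]) * ((c b j i)⁻¹ : (A b)ˣ) * Mprod G c b 1 (⟨j, v⟩ :: T) := by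
  rcases H with _ | ⟨⟨x, w⟩, H⟩
  · simp [Mprod]
  · rw [List.cons_append, List.append_cons, Mprod_one_cons_append_cons, List.cons_append,
      List.map_append, List.map_singleton, List.getLastD_concat]

theorem Mprod_cons_mul {b i : ℕ} (hc : c b i i = 1) (last : A b) (u v : A i)
    (T : List ((i : ℕ) × A i)) :
    Mprod G c b last (⟨i, u * v⟩ :: T) = Mprod G c b last (⟨i, u⟩ :: ⟨i, v⟩ :: T) := by
  rcases T with _ | ⟨⟨j, w⟩, T⟩ <;> simp [Mprod, hc, mul_assoc]

theorem Mprod_append_cons_mul {b i : ℕ} (hc : c b i i = 1) (last : A b)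
    (H : List ((i : ℕ) × A i)) (u v : A i) (T : List ((i : ℕ) × A i)) :
    Mprod G c b last (H ++ ⟨i, u * v⟩ :: T) = Mprod G c b last (H ++ ⟨i, u⟩ :: ⟨i, v⟩ :: T) := by
  rcases H with _ | ⟨⟨x, w⟩, H⟩
  · exact Mprod_cons_mul G c hc last u v T
  · rw [Mprod_eq_Mprod_one_mul, Mprod_eq_Mprod_one_mul _ _ _ last, List.cons_append,
      List.cons_append, Mprod_one_cons_append_cons, Mprod_one_cons_append_cons,
      Mprod_cons_mul G c hc]

theorem map_Mprod_one_cons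
    (hconj : ConjugationRule G c) (hcc : CocycleCondition G c)
    {b j : ℕ} (hbj : b ≤ j) (i : ℕ) (u : A i) (L : List ((i : ℕ) × A i))
    (hchain : (i :: L.map Sigma.fst).IsChain (· ≥ ·)) (hbound : ∀ r ∈ i :: L.map Sigma.fst, j ≤ r) :
    G b j (Mprod G c j 1 (⟨i, u⟩ :: L)) =
      c b j i * Mprod G c b 1 (⟨i, u⟩ :: L) *
        ((c b j ((L.map Sigma.fst).getLastD i))⁻¹ : (A b)ˣ) := by
  induction L generalizing i u with
  | nil =>
    simp only [Mprod, mul_one, List.map_nil, List.getLastD_nil]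
    exact hconj b j i hbj (hbound i List.mem_cons_self) u
  | cons x L ih =>
    obtain ⟨a, w⟩ := x
    simp only [List.map_cons, List.isChain_cons_cons, List.forall_mem_cons] at hchain hbound
    obtain ⟨hai, hchain⟩ := hchain
    obtain ⟨hji, hja, hbound⟩ := hbound
    rw [Mprod, map_mul, map_mul, hconj b j i hbj hji,
      ih a w hchain (List.forall_mem_cons.2 ⟨hja, hbound⟩), Mprod, List.map_cons,
      List.getLastD_cons,
      ← Units.inv_mul_map_inv_mul_eq_inv (G b j) (hcc b j a i hbj hja hai)]
    simp only [mul_assoc]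

theorem Mprod_one_cons_append_cons_collapse
    (hconj : ConjugationRule G c) (hcc : CocycleCondition G c)
    {b p : ℕ} (hbp : b ≤ p) (hcpp : c b p p = 1) (q : ℕ) (z : A q) (L : List ((i : ℕ) × A i))
    (hchain : (q :: L.map Sigma.fst).IsChain (· ≥ ·)) (hbound : ∀ r ∈ q :: L.map Sigma.fst, p ≤ r)
    (y' z' : A p) (T : List ((i : ℕ) × A i)) :
    Mprod G c b 1 (⟨q, z⟩ :: (L ++ ⟨p, y' * z'⟩ :: T)) =
      ((c b p q)⁻¹ : (A b)ˣ) * Mprod G c b 1 (⟨p, Mprod G c p y' (⟨q, z⟩ :: L) * z'⟩ :: T) := by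
  rw [Mprod_one_cons_append_cons, Mprod_cons_mul G c hcpp, Mprod_cons_mul G c hcpp, Mprod,
    Mprod, Mprod_eq_Mprod_one_mul _ _ p y', map_mul,
    map_Mprod_one_cons G c hconj hcc hbp q z L hchain hbound, hcpp]
  simp only [inv_one, Units.val_one, mul_one, mul_assoc, Units.inv_mul_cancel_left]

theorem Mprod_append_cons_regroup
    (hconj : ConjugationRule G c) (hcc : CocycleCondition G c)
    {b p q : ℕ} (hbp : b ≤ p) (hcpp : c b p p = 1) (hcqq : c b q q = 1) (last : A b)
    (H : List ((i : ℕ) × A i)) (y z : A q) (L : List ((i : ℕ) × A i))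
    (hchain : (q :: L.map Sigma.fst).IsChain (· ≥ ·)) (hbound : ∀ r ∈ q :: L.map Sigma.fst, p ≤ r)
    (y' z' : A p) (T : List ((i : ℕ) × A i)) :
    Mprod G c b last (H ++ ⟨q, y * z⟩ :: (L ++ ⟨p, y' * z'⟩ :: T)) =
      Mprod G c b last (H ++ ⟨q, y⟩ :: ⟨p, Mprod G c p y' (⟨q, z⟩ :: L) * z'⟩ :: T) := by
  rw [Mprod_append_cons_mul G c hcqq, Mprod_eq_Mprod_one_mul, Mprod_eq_Mprod_one_mul _ _ _ last,
    Mprod_one_append_cons_cons, Mprod_one_append_cons_cons,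
    Mprod_one_cons_append_cons_collapse G c hconj hcc hbp hcpp q z L hchain hbound, hcqq]
  simp only [inv_one, Units.val_one, mul_one, mul_assoc]

theorem Mprod_append_cons_regroup_last {b q : ℕ} (hcqq : c b q q = 1)
    (H : List ((i : ℕ) × A i)) (y z : A q) (L : List ((i : ℕ) × A i)) (y' z' : A b) :
    Mprod G c b (y' * z') (H ++ ⟨q, y * z⟩ :: L) =
      Mprod G c b (Mprod G c b y' (⟨q, z⟩ :: L) * z') (H ++ [⟨q, y⟩]) := by
  rw [Mprod_append_cons_mul G c hcqq, Mprod_eq_Mprod_one_mul, Mprod_eq_Mprod_one_mul _ _ _ (_ * z'),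
    Mprod_one_append_cons_cons, Mprod_eq_Mprod_one_mul _ _ _ y', hcqq]
  simp only [inv_one, Units.val_one, mul_one, mul_assoc]

end

theorem Mprod_decomposition_general
    (G : ∀ i j : ℕ, A j →ₐ[R] A i) (c : ∀ i j l : ℕ, (A i)ˣ)
    (hconj : ∀ i j l : ℕ, i ≤ j → j ≤ l → ∀ x : A l,
      G i j (G j l x) = (c i j l : A i) * G i l x * (((c i j l)⁻¹ : (A i)ˣ) : A i))
    (hcill : ∀ i l : ℕ, i ≤ l → c i l l = 1)
    (hcc : ∀ i j l m : ℕ, i ≤ j → j ≤ l → l ≤ m →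
      (c i j l : A i) * (c i l m : A i) = G i j (c j l m : A j) * (c i j m : A i))
    (k p q : ℕ) (hpq : p < q) (hqk : q ≤ k)
    (y z : ∀ r : ℕ, A r) :
    Mprod G c 0 (y 0 * z 0)
        ((descIdx k 1).map (fun r => (⟨r, y r * z r⟩ : (i : ℕ) × A i)))
      = (if hp : p = 0 then
          Mprod G c 0
            ((cast (congrArg A hp)
                (Mprod G c p (y p)
                  (⟨q, z q⟩ ::
                    (descIdx (q - 1) (p + 1)).map (fun r => (⟨r, y r * z r⟩ : (i : ℕ) × A i)))))
              * z 0)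
            (((descIdx k (q + 1)).map (fun r => (⟨r, y r * z r⟩ : (i : ℕ) × A i)))
              ++ [⟨q, y q⟩])
        else
          Mprod G c 0 (y 0 * z 0)
            (((descIdx k (q + 1)).map (fun r => (⟨r, y r * z r⟩ : (i : ℕ) × A i)))
              ++ [⟨q, y q⟩,
                  ⟨p, (Mprod G c p (y p)
                        (⟨q, z q⟩ ::
                          (descIdx (q - 1) (p + 1)).map
                            (fun r => (⟨r, y r * z r⟩ : (i : ℕ) × A i)))) * z p⟩]
              ++ (descIdx (p - 1) 1).map (fun r => (⟨r, y r * z r⟩ : (i : ℕ) × A i)))) := by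
  have hq : 0 < q := by omega
  split_ifs with hp0
  · subst hp0
    rw [cast_eq, descIdx_eq_append_cons one_pos hq hqk, List.map_append, List.map_cons]
    exact Mprod_append_cons_regroup_last G c (hcill 0 q q.zero_le) _ (y q) (z q) _ (y 0) (z 0)
  · have hp : 0 < p := Nat.pos_of_ne_zero hp0
    have hrun : q :: (((descIdx (q - 1) (p + 1)).map
        (fun r => (⟨r, y r * z r⟩ : (i : ℕ) × A i))).map Sigma.fst) = descIdx q (p + 1) := by
      simp [descIdx_eq_cons (Nat.succ_pos p) hpq, List.map_map, Function.comp_def]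
    rw [descIdx_eq_append_cons one_pos hq hqk,
      descIdx_eq_append_cons one_pos hp (Nat.le_sub_one_of_lt hpq)]
    simp only [List.map_append, List.map_cons, List.append_assoc, List.cons_append,
      List.nil_append]
    refine Mprod_append_cons_regroup G c hconj hcc p.zero_le (hcill 0 p p.zero_le)
      (hcill 0 q q.zero_le) _ _ (y q) (z q) _ (hrun ▸ descIdx_isChain_ge q (p + 1))
      (fun r hr => ?_) (y p) (z p) _
    exact Nat.le_of_succ_le (le_of_mem_descIdx (hrun ▸ hr))

/-- Decomposition formula for the gerbe-twisted multilinear product `M`: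
for `0 ≤ p < q ≤ k` and `y_r, z_r ∈ A_r`,
`M_{(k,…,0)}(y_k z_k ⊗ ⋯ ⊗ y_0 z_0)
  = M_{(k,…,q+1,q,p,…,0)}(y_k z_k ⊗ ⋯ ⊗ y_{q+1} z_{q+1} ⊗ y_q ⊗ W·z_p ⊗ y_{p−1}z_{p−1} ⊗ ⋯ ⊗ y_0 z_0)`
where `W = M_{(q,…,p)}(z_q ⊗ y_{q−1}z_{q−1} ⊗ ⋯ ⊗ y_{p+1}z_{p+1} ⊗ y_p)`. -/
theorem Mprod_decomposition
    (G : ∀ i j : ℕ, A j →ₐ[R] A i) (c : ∀ i j l : ℕ, (A i)ˣ)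
    (hGid : ∀ (i : ℕ) (x : A i), G i i x = x)
    (hconj : ∀ i j l : ℕ, i ≤ j → j ≤ l → ∀ x : A l,
      G i j (G j l x) = (c i j l : A i) * G i l x * (((c i j l)⁻¹ : (A i)ˣ) : A i))
    (hciil : ∀ i l : ℕ, i ≤ l → c i i l = 1)
    (hcill : ∀ i l : ℕ, i ≤ l → c i l l = 1)
    (hcc : ∀ i j l m : ℕ, i ≤ j → j ≤ l → l ≤ m →
      (c i j l : A i) * (c i l m : A i) = G i j (c j l m : A j) * (c i j m : A i))
    (k p q : ℕ) (hpq : p < q) (hqk : q ≤ k)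
    (y z : ∀ r : ℕ, A r) :
    Mprod G c 0 (y 0 * z 0)
        ((descIdx k 1).map (fun r => (⟨r, y r * z r⟩ : (i : ℕ) × A i)))
      = (if hp : p = 0 then
          Mprod G c 0
            ((cast (congrArg A hp)
                (Mprod G c p (y p)
                  (⟨q, z q⟩ ::
                    (descIdx (q - 1) (p + 1)).map (fun r => (⟨r, y r * z r⟩ : (i : ℕ) × A i)))))
              * z 0)
            (((descIdx k (q + 1)).map (fun r => (⟨r, y r * z r⟩ : (i : ℕ) × A i)))
              ++ [⟨q, y q⟩])
        else
          Mprod G c 0 (y 0 * z 0)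
            (((descIdx k (q + 1)).map (fun r => (⟨r, y r * z r⟩ : (i : ℕ) × A i)))
              ++ [⟨q, y q⟩,
                  ⟨p, (Mprod G c p (y p)
                        (⟨q, z q⟩ ::
                          (descIdx (q - 1) (p + 1)).map
                            (fun r => (⟨r, y r * z r⟩ : (i : ℕ) × A i)))) * z p⟩]
              ++ (descIdx (p - 1) 1).map (fun r => (⟨r, y r * z r⟩ : (i : ℕ) × A i)))) :=
  Mprod_decomposition_general G c hconj hcill hcc k p q hpq hqk y z

end
end
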